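/- For almost every (x_i)_{i∈I} ∈ (ℝ^n)^I the following holds: if T(F^•) has empty interior in T^n, then for every k ≥ 0, all i_0, …, i_k ∈ I, and all m̄_1, …, m̄_k ∈ ℤ^n, the linear k-simplex [x_{i_0}, x_{i_1}+m̄_1, …, x_{i_k}+m̄_k] mod ℤ^n belongs to X(F^•)_k if and only if deg(i_0) < ⋯ < deg(i_k) and π(convexHull{x_{i_0}, x_{i_1}+m̄_1, …, x_{i_k}+m̄_k}) ⊆ T(F^•). -/

import Mathlib

open scoped BigOperators
open MeasureTheory

noncomputable section

/-- `ℤ^n`, the exponent lattice. -/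
abbrev Zn (n : ℕ) : Type := Fin n → ℤ

/-- `ℝ^n`. -/
abbrev Rn (n : ℕ) : Type := Fin n → ℝ

/-- The Laurent polynomial ring `R_n = ℂ[z_1^{±1},…,z_n^{±1}]`, realized as the group
algebra of `ℤ^n` over `ℂ`. -/
abbrev LaurentRing (n : ℕ) : Type := AddMonoidAlgebra ℂ (Zn n)

/-- The embedding `ℤ^n → ℝ^n`. -/
def zToR {n : ℕ} (m : Zn n) : Rn n := fun j => (m j : ℝ)

/-- A bounded based sequence `F^•` of finite-rank free `R_n`-modules: a finite index set
`I = ⊔_k I_k` (with `I_k = ∅` for `k > 0` and `I_0 ≠ ∅`), recorded via a degree function,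
together with the matrix entries `d^k_{ij} ∈ R_n` of the maps `F^k → F^{k+1}`. -/
structure BasedSeq (n : ℕ) where
  I : Type
  fintypeI : Fintype I
  deg : I → ℤ
  deg_nonpos : ∀ i, deg i ≤ 0
  exists_deg_zero : ∃ i, deg i = 0
  d : I → I → LaurentRing n
  d_eq_zero : ∀ i j, deg i ≠ deg j + 1 → d i j = 0

attribute [instance] BasedSeq.fintypeI

/-- Chains witnessing membership in `E_{ij}`: `EChain F i j m` holds iff there is a chain
`j = i_0, i_1, …, i_k = i` with `deg i_ℓ = deg i_{ℓ-1} + 1` at each step, exponents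
`m_ℓ` in the support of the corresponding matrix entry, and `m = m_1 + ⋯ + m_k`. -/
inductive EChain {n : ℕ} (F : BasedSeq n) : F.I → F.I → Zn n → Prop where
  | base {i j : F.I} {m : Zn n} :
      F.deg i = F.deg j + 1 → m ∈ (F.d i j).coeff.support → EChain F i j m
  | step {i j k : F.I} {m m' : Zn n} :
      EChain F j k m → F.deg i = F.deg j + 1 → m' ∈ (F.d i j).coeff.support →
      EChain F i k (m + m')

/-- The subset `E_{ij} ⊆ ℤ^n`. -/
def Eset {n : ℕ} (F : BasedSeq n) (i j : F.I) : Set (Zn n) := {m | EChain F i j m}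

/-- The condition `(m_1, …, m_k) ∈ E_{i_1 i_0} × ⋯ × E_{i_k i_{k-1}}`. -/
def goodTuple {n : ℕ} (F : BasedSeq n) {k : ℕ} (c : Fin (k + 1) → F.I)
    (m : Fin k → Zn n) : Prop :=
  ∀ ℓ : Fin k, m ℓ ∈ Eset F (c ℓ.succ) (c ℓ.castSucc)

/-- The vertex tuple `(x_{i_0}, x_{i_1}+m_1, …, x_{i_k}+m_1+⋯+m_k)` in `ℝ^n`. -/
def vtx {n : ℕ} (F : BasedSeq n) (x : F.I → Rn n) {k : ℕ}
    (c : Fin (k + 1) → F.I) (m : Fin k → Zn n) : Fin (k + 1) → Rn n :=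
  fun a => x (c a) + zToR (∑ ℓ ∈ Finset.univ.filter (fun ℓ : Fin k => (ℓ : ℕ) < (a : ℕ)), m ℓ)

/-- Membership in `X(F^•)_k`: the tuple `y` represents (mod a common `ℤ^n`-translation `t`)
one of the linear `k`-simplices `[x_{i_0}, x_{i_1}+m_1, …, x_{i_k}+m_1+⋯+m_k] mod ℤ^n`. -/
def InX {n : ℕ} (F : BasedSeq n) (x : F.I → Rn n) (k : ℕ)
    (y : Fin (k + 1) → Rn n) : Prop :=
  ∃ (c : Fin (k + 1) → F.I) (m : Fin k → Zn n) (t : Zn n),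
    goodTuple F c m ∧ ∀ a, y a = vtx F x c m a + zToR t

/-- The integer lattice `ℤ^n ⊆ ℝ^n` as an additive subgroup. -/
def intLattice (n : ℕ) : AddSubgroup (Rn n) :=
  AddSubgroup.pi Set.univ fun _ => AddSubgroup.zmultiples (1 : ℝ)

/-- The torus `T^n = ℝ^n/ℤ^n`. -/
abbrev Torus (n : ℕ) := Rn n ⧸ intLattice n

/-- The projection `π : ℝ^n → T^n`. -/
def toTorus {n : ℕ} : Rn n → Torus n := QuotientAddGroup.mk

/-- The tropical Lagrangian coamoeba `T(F^•) ⊆ T^n`. -/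
def TropT {n : ℕ} (F : BasedSeq n) (x : F.I → Rn n) : Set (Torus n) :=
  ⋃ (k : ℕ), ⋃ (c : Fin (k + 1) → F.I), ⋃ (m : Fin k → Zn n), ⋃ (_ : goodTuple F c m),
    toTorus '' convexHull ℝ (Set.range (vtx F x c m))

/-- The subset `S_i ⊆ ℝ^n`. -/
def Sset {n : ℕ} (F : BasedSeq n) (x : F.I → Rn n) (i : F.I) : Set (Rn n) :=
  ⋃ (k : ℕ), ⋃ (c : Fin (k + 1) → F.I), ⋃ (m : Fin k → Zn n),
    ⋃ (_ : c 0 = i ∧ goodTuple F c m), convexHull ℝ (Set.range (vtx F x c m))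

/-- `[x, S] = {t·x + (1−t)·y : y ∈ S, t ∈ [0,1]}`. -/
def joinSet {n : ℕ} (x : Rn n) (S : Set (Rn n)) : Set (Rn n) :=
  {p | ∃ y ∈ S, ∃ t ∈ Set.Icc (0 : ℝ) 1, p = t • x + (1 - t) • y}

section basics
variable {n : ℕ}

lemma zToR_add (a b : Zn n) : zToR (a + b) = zToR a + zToR b := by
  funext j; simp [zToR]

lemma zToR_sub (a b : Zn n) : zToR (a - b) = zToR a - zToR b := by
  funext j; simp [zToR]

lemma zToR_zero : zToR (0 : Zn n) = 0 := by funext j; simp [zToR]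

lemma zToR_injective : Function.Injective (zToR (n := n)) := by
  intro a b h
  funext j
  have : ((a j : ℝ)) = (b j : ℝ) := congrFun h j
  exact_mod_cast this

lemma zToR_mem_intLattice (t : Zn n) : zToR t ∈ intLattice n := by
  intro j _
  exact ⟨t j, by simp [zToR]⟩

lemma exists_zToR_of_mem_intLattice {v : Rn n} (h : v ∈ intLattice n) :
    ∃ t : Zn n, v = zToR t := by
  have h' : ∀ j, ∃ k : ℤ, (k : ℝ) = v j := by
    intro j
    obtain ⟨k, hk⟩ := h j (Set.mem_univ j)
    exact ⟨k, by simpa using hk⟩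
  choose t ht using h'
  exact ⟨t, by funext j; exact (ht j).symm⟩

lemma toTorus_add_lattice (p : Rn n) (t : Zn n) : toTorus (p + zToR t) = toTorus p := by
  refine (QuotientAddGroup.eq_iff_sub_mem).2 ?_
  simpa using zToR_mem_intLattice t

lemma toTorus_eq_iff {p q : Rn n} : toTorus p = toTorus q ↔ ∃ t : Zn n, p = q + zToR t := by
  constructor
  · intro h
    obtain ⟨t, ht⟩ := exists_zToR_of_mem_intLattice ((QuotientAddGroup.eq_iff_sub_mem).1 h)
    exact ⟨t, by linear_combination (norm := abel) ht⟩
  · rintro ⟨t, rfl⟩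
    exact toTorus_add_lattice q t

lemma continuous_toTorus : Continuous (toTorus (n := n)) := continuous_quot_mk

lemma isOpenMap_toTorus : IsOpenMap (toTorus (n := n)) := QuotientAddGroup.isOpenMap_coe

end basics

section chain
variable {n : ℕ} {F : BasedSeq n}

lemma EChain.deg_lt {i j : F.I} {m : Zn n} (h : EChain F i j m) : F.deg j < F.deg i := by
  induction h with
  | base h _ => omega
  | step _ h _ ih => omega

lemma EChain.trans' {i j k : F.I} {m m' : Zn n} (h1 : EChain F j k m) (h2 : EChain F i j m') :
    EChain F i k (m + m') := by
  induction h2 with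
  | base hd hm => exact h1.step hd hm
  | step _ hd hm ih => rw [← add_assoc]; exact (ih h1).step hd hm

/-- prefix sums of the exponent tuple. -/
def pSum {k' : ℕ} (m : Fin k' → Zn n) (b : Fin (k' + 1)) : Zn n :=
  ∑ ℓ ∈ Finset.univ.filter (fun ℓ : Fin k' => (ℓ : ℕ) < (b : ℕ)), m ℓ

lemma vtx_eq_pSum (x : F.I → Rn n) {k' : ℕ} (c : Fin (k' + 1) → F.I) (m : Fin k' → Zn n)
    (a : Fin (k' + 1)) : vtx F x c m a = x (c a) + zToR (pSum m a) := rfl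

lemma pSum_zero {k' : ℕ} (m : Fin k' → Zn n) : pSum m 0 = 0 := by
  simp [pSum]

lemma pSum_succ {k' : ℕ} (m : Fin k' → Zn n) (ℓ : Fin k') :
    pSum m ℓ.succ = pSum m ℓ.castSucc + m ℓ := by
  have h : Finset.univ.filter (fun t : Fin k' => (t : ℕ) < (ℓ.succ : ℕ)) =
      insert ℓ (Finset.univ.filter (fun t : Fin k' => (t : ℕ) < (ℓ.castSucc : ℕ))) := by
    ext t
    simp only [Finset.mem_filter, Finset.mem_univ, true_and, Finset.mem_insert,
      Fin.val_succ, Fin.coe_castSucc]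
    constructor
    · intro ht
      rcases Nat.lt_or_ge (t : ℕ) (ℓ : ℕ) with h' | h'
      · exact Or.inr h'
      · exact Or.inl (Fin.ext (by omega))
    · rintro (rfl | ht) <;> omega
  rw [pSum, h, Finset.sum_insert (by simp), pSum]
  abel

lemma goodTuple.strictMono_deg {k' : ℕ} {c : Fin (k' + 1) → F.I} {m : Fin k' → Zn n}
    (hg : goodTuple F c m) : StrictMono fun b => F.deg (c b) := by
  rw [Fin.strictMono_iff_lt_succ]
  intro ℓ
  exact (hg ℓ).deg_lt

lemma goodTuple.injective {k' : ℕ} {c : Fin (k' + 1) → F.I} {m : Fin k' → Zn n}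
    (hg : goodTuple F c m) : Function.Injective c := by
  intro a b hab
  exact hg.strictMono_deg.injective (by rw [hab])

lemma goodTuple.echain_pSum {k' : ℕ} {c : Fin (k' + 1) → F.I} {m : Fin k' → Zn n}
    (hg : goodTuple F c m) {p q : Fin (k' + 1)} (hpq : p < q) :
    EChain F (c q) (c p) (pSum m q - pSum m p) := by
  induction q using Fin.induction with
  | zero => exact absurd hpq (by simp)
  | succ ℓ ih =>
    have hple : p ≤ ℓ.castSucc := by
      have : (p : ℕ) < (ℓ : ℕ) + 1 := hpq
      exact Fin.le_def.2 (by simpa using Nat.lt_succ_iff.1 this)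
    rcases eq_or_lt_of_le hple with rfl | hplt
    · have := hg ℓ
      have hs : pSum m ℓ.succ - pSum m ℓ.castSucc = m ℓ := by rw [pSum_succ]; abel
      rw [hs]
      exact this
    · have h1 := ih hplt
      have h2 := hg ℓ
      have := h1.trans' h2
      have hs : pSum m ℓ.castSucc - pSum m p + m ℓ = pSum m ℓ.succ - pSum m p := by
        rw [pSum_succ]; abel
      rwa [hs] at this

end chain

section spanB
variable {n : ℕ}

/-- Linear combinations with coefficients bounded by `R`. -/
def spanB (R : ℝ) {m : ℕ} (g : Fin m → Rn n) : Set (Rn n) :=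
  {e | ∃ w : Fin m → ℝ, (∀ b, |w b| ≤ R) ∧ e = ∑ b, w b • g b}

lemma spanB_subset_span {R : ℝ} {m : ℕ} {g : Fin m → Rn n} :
    spanB R g ⊆ (Submodule.span ℝ (Set.range g) : Set (Rn n)) := by
  rintro e ⟨w, -, rfl⟩
  exact Submodule.sum_mem _ fun b _ =>
    Submodule.smul_mem _ _ (Submodule.subset_span (Set.mem_range_self b))

lemma exists_spanB_of_mem_span {m : ℕ} {g : Fin m → Rn n} {e : Rn n}
    (h : e ∈ Submodule.span ℝ (Set.range g)) : ∃ R : ℕ, e ∈ spanB R g := by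
  obtain ⟨w, hw⟩ := (Submodule.mem_span_range_iff_exists_fun ℝ).1 h
  obtain ⟨R, hR⟩ := exists_nat_ge (∑ b, |w b|)
  refine ⟨R, w, fun b => ?_, hw.symm⟩
  calc |w b| ≤ ∑ b', |w b'| := Finset.single_le_sum (f := fun b' => |w b'|) (fun b' _ => abs_nonneg _) (Finset.mem_univ b)
  _ ≤ R := hR

/-- closedness of the bounded-combination condition. -/
lemma isClosed_spanB {X : Type*} [TopologicalSpace X] [SequentialSpace X]
    {m : ℕ} {f : X → Rn n} {g : X → Fin m → Rn n} (hf : Continuous f)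
    (hg : Continuous g) (R : ℝ) : IsClosed {x : X | f x ∈ spanB R (g x)} := by
  refine IsSeqClosed.isClosed ?_
  intro xs x hmem hx
  choose w hw1 hw2 using hmem
  have hK : IsCompact (Set.pi Set.univ fun _ : Fin m => Set.Icc (-R) R) :=
    isCompact_univ_pi fun _ => isCompact_Icc
  have hwK : ∀ k, w k ∈ Set.pi Set.univ fun _ : Fin m => Set.Icc (-R) R := by
    intro k b _
    exact abs_le.1 (hw1 k b)
  obtain ⟨w0, hw0K, φ, hφ, hwφ⟩ := hK.tendsto_subseq hwK
  have hxφ : Filter.Tendsto (xs ∘ φ) Filter.atTop (nhds x) := hx.comp hφ.tendsto_atTop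
  have h1 : Filter.Tendsto (fun k => f (xs (φ k))) Filter.atTop (nhds (f x)) :=
    (hf.tendsto x).comp hxφ
  have h2 : Filter.Tendsto (fun k => ∑ b, w (φ k) b • g (xs (φ k)) b) Filter.atTop
      (nhds (∑ b, w0 b • g x b)) := by
    refine tendsto_finset_sum _ fun b _ => Filter.Tendsto.smul ?_ ?_
    · exact (tendsto_pi_nhds.1 hwφ) b
    · exact ((continuous_apply b).tendsto _).comp ((hg.tendsto x).comp hxφ)
  have h12 : f x = ∑ b, w0 b • g x b := by
    refine tendsto_nhds_unique h1 ?_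
    have : (fun k => f (xs (φ k))) = fun k => ∑ b, w (φ k) b • g (xs (φ k)) b := by
      funext k; exact hw2 (φ k)
    rw [this]; exact h2
  exact ⟨w0, fun b => abs_le.2 (hw0K b (Set.mem_univ b)), h12⟩

/-- spanning by a finite family is an open condition. -/
lemma isOpen_span_top {X : Type*} [TopologicalSpace X] (hn : 1 ≤ n)
    {m : ℕ} {g : X → Fin m → Rn n} (hg : Continuous g) :
    IsOpen {x : X | Submodule.span ℝ (Set.range (g x)) = ⊤} := by
  haveI : Nonempty (Fin n) := ⟨⟨0, hn⟩⟩
  have hset : {x : X | Submodule.span ℝ (Set.range (g x)) = ⊤} =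
      ⋃ σ : Fin n → Fin m, {x : X | LinearIndependent ℝ (g x ∘ σ)} := by
    ext x
    simp only [Set.mem_setOf_eq, Set.mem_iUnion]
    constructor
    · intro htop
      obtain ⟨b, hbsub, hbspan, hbli⟩ := exists_linearIndependent ℝ (Set.range (g x))
      rw [htop] at hbspan
      haveI : Fintype b := ((Set.finite_range (g x)).subset hbsub).fintype
      have hbasis : Module.Basis b ℝ (Rn n) :=
        Module.Basis.mk hbli (by rw [Subtype.range_val]; exact le_of_eq hbspan.symm)
      have hcard : Fintype.card b = n := by
        have := Module.finrank_eq_card_basis hbasis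
        simpa using this.symm
      have e : Fin n ≃ b := (Fintype.equivFinOfCardEq hcard).symm
      have hsel : ∀ a : Fin n, ∃ s : Fin m, g x s = (e a : Rn n) := by
        intro a
        obtain ⟨s, hs⟩ := hbsub (e a).2
        exact ⟨s, hs⟩
      choose σ hσ using hsel
      refine ⟨σ, ?_⟩
      have : g x ∘ σ = Subtype.val ∘ e := by funext a; exact hσ a
      rw [this]
      exact hbli.comp e e.injective
    · rintro ⟨σ, hσ⟩
      have hsub : Submodule.span ℝ (Set.range (g x ∘ σ)) ≤ Submodule.span ℝ (Set.range (g x)) :=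
        Submodule.span_mono (Set.range_comp_subset_range σ (g x))
      have htop : Submodule.span ℝ (Set.range (g x ∘ σ)) = ⊤ :=
        hσ.span_eq_top_of_card_eq_finrank (by simp)
      rw [htop] at hsub
      exact top_le_iff.1 hsub
  rw [hset]
  refine isOpen_iUnion fun σ => ?_
  have : Continuous fun x => g x ∘ σ := by
    refine continuous_pi fun a => ?_
    exact (continuous_apply (σ a)).comp hg
  exact isOpen_setOf_linearIndependent.preimage this

lemma spanB_zero_empty {g : Fin 0 → Rn n} {e : Rn n} : e ∈ spanB 0 g ↔ e = 0 := by
  constructor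
  · rintro ⟨w, -, rfl⟩; simp
  · rintro rfl; exact ⟨fun b => 0, fun b => by simp, by simp⟩

end spanB

section fubini
open Function
variable {n : ℕ}

lemma pi_fintype_irrel {ι : Type*} {β : ι → Type*} [∀ i, MeasurableSpace (β i)]
    (F1 F2 : Fintype ι) (μ : ∀ i, Measure (β i)) :
    @Measure.pi ι β F1 _ μ = @Measure.pi ι β F2 _ μ := by
  cases Subsingleton.elim F1 F2
  rfl

/-- Fubini: a measurable set all of whose one-coordinate slices are null is null. -/
lemma slice_null {α : Type} [Fintype α] [DecidableEq α] (i0 : α)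
    {S : Set (α → Rn n)} (hS : MeasurableSet S)
    (h : ∀ y : α → Rn n, volume {e : Rn n | Function.update y i0 e ∈ S} = 0) :
    volume S = 0 := by
  classical
  set p : α → Prop := fun a => a = i0 with hp
  haveI instU : Unique (Subtype p) := ⟨⟨⟨i0, rfl⟩⟩, by rintro ⟨a, ha⟩; exact Subtype.ext ha⟩
  have hmp := measurePreserving_piEquivPiSubtypeProd (fun _ : α => (volume : Measure (Rn n))) p
  set φ := MeasurableEquiv.piEquivPiSubtypeProd (fun _ : α => Rn n) p with hφ
  set A := φ.symm ⁻¹' S with hA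
  have hAmeas : MeasurableSet A := φ.symm.measurable hS
  have hpre : φ ⁻¹' A = S := by
    rw [hA, ← Set.preimage_comp]
    have : (φ.symm ∘ φ) = id := by funext z; exact φ.symm_apply_apply z
    rw [this, Set.preimage_id]
  rw [MeasureTheory.volume_pi, ← hpre, hmp.measure_preimage hAmeas.nullMeasurableSet,
    Measure.prod_apply_symm hAmeas]
  refine Eq.trans (lintegral_congr fun y => ?_) lintegral_zero
  set xy : α → Rn n := fun a => if h : p a then 0 else y ⟨a, h⟩ with hxy
  have hkey : ∀ w : Subtype p → Rn n,
      φ.symm (w, y) = Function.update xy i0 (w default) := by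
    intro w
    funext a
    have : φ.symm (w, y) a = if h : p a then w ⟨a, h⟩ else y ⟨a, h⟩ :=
      Equiv.piEquivPiSubtypeProd_symm_apply p (fun _ => Rn n) (w, y) a
    rw [this]
    by_cases ha : p a
    · have ha' : a = i0 := ha
      subst ha'
      rw [dif_pos ha, Function.update_self]
      exact congrArg w (Subsingleton.elim _ _)
    · rw [dif_neg ha, Function.update_of_ne ha]
      rw [hxy]; simp only [dif_neg ha]
  have heq : ((fun w => (w, y)) ⁻¹' A) =
      (⇑(MeasurableEquiv.funUnique (Subtype p) (Rn n))) ⁻¹'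
        {e : Rn n | Function.update xy i0 e ∈ S} := by
    ext w
    simp only [Set.mem_preimage, hA, Set.mem_setOf_eq]
    rw [hkey w]
    rfl
  have hBm : MeasurableSet {e : Rn n | Function.update xy i0 e ∈ S} :=
    (measurable_update xy) hS
  have hval := (measurePreserving_funUnique (volume : Measure (Rn n))
    (Subtype p)).measure_preimage (s := {e : Rn n | Function.update xy i0 e ∈ S})
    hBm.nullMeasurableSet
  have hfin := pi_fintype_irrel (β := fun _ : Subtype p => Rn n)
    (Subtype.fintype p) (@Unique.fintype _ instU) (fun _ => (volume : Measure (Rn n)))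
  rw [heq, hfin]
  exact hval.trans (h xy)

end fubini

section keylemma
open Function
variable {n : ℕ}

/-- The key genericity null set lemma: if `g` and `h` do not depend on the coordinate `i0`,
then the set where `x i0 + h x` lies in a bounded combination of the (non-spanning) family
`g x` is null. -/
lemma key_null (hn : 1 ≤ n) {α : Type} [Fintype α] [DecidableEq α] (i0 : α)
    {m : ℕ} (g : (α → Rn n) → Fin m → Rn n) (h : (α → Rn n) → Rn n)
    (hg : Continuous g) (hh : Continuous h)
    (hgi : ∀ x e, g (Function.update x i0 e) = g x)
    (hhi : ∀ x e, h (Function.update x i0 e) = h x) (R : ℝ) :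
    volume {x : α → Rn n | Submodule.span ℝ (Set.range (g x)) ≠ ⊤ ∧
      x i0 + h x ∈ spanB R (g x)} = 0 := by
  have hclosed : IsClosed {x : α → Rn n | Submodule.span ℝ (Set.range (g x)) ≠ ⊤ ∧
      x i0 + h x ∈ spanB R (g x)} := by
    refine IsClosed.inter ?_ ?_
    · exact (isOpen_span_top hn hg).isClosed_compl
    · exact isClosed_spanB ((continuous_apply i0).add hh) hg R
  refine slice_null i0 hclosed.measurableSet ?_
  intro y
  by_cases htop : Submodule.span ℝ (Set.range (g y)) = ⊤
  · have : {e : Rn n | Function.update y i0 e ∈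
        {x : α → Rn n | Submodule.span ℝ (Set.range (g x)) ≠ ⊤ ∧
          x i0 + h x ∈ spanB R (g x)}} = ∅ := by
      ext e
      simp only [Set.mem_setOf_eq, Set.mem_empty_iff_false, iff_false, not_and]
      intro hne
      exact absurd (by rw [hgi y e]; exact htop) hne
    rw [this]; exact measure_empty
  · have hsub : {e : Rn n | Function.update y i0 e ∈
        {x : α → Rn n | Submodule.span ℝ (Set.range (g x)) ≠ ⊤ ∧
          x i0 + h x ∈ spanB R (g x)}} ⊆
        (fun e => e + h y) ⁻¹' (Submodule.span ℝ (Set.range (g y)) : Set (Rn n)) := by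
      intro e he
      simp only [Set.mem_setOf_eq] at he
      obtain ⟨-, hmem⟩ := he
      rw [hgi y e, hhi y e, Function.update_self] at hmem
      exact spanB_subset_span hmem
    refine measure_mono_null hsub ?_
    rw [measure_preimage_add_right]
    exact Measure.addHaar_submodule _ _ htop

/-- Main induction: the set where a fixed nonzero vector `u` lies in the (proper) span of
the generic difference family is null. -/
lemma null3 (hn : 1 ≤ n) {α : Type} [Fintype α] [DecidableEq α] :
    ∀ (r : ℕ) (j : Fin (r + 1) → α), Function.Injective j →
      ∀ (δ : Fin r → Rn n) (u : Rn n), u ≠ 0 → ∀ R : ℝ,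
      volume {x : α → Rn n |
        Submodule.span ℝ (Set.range fun b : Fin r => x (j b.succ) - x (j 0) + δ b) ≠ ⊤ ∧
        u ∈ spanB R fun b : Fin r => x (j b.succ) - x (j 0) + δ b} = 0 := by
  intro r
  induction r with
  | zero =>
    intro j hj δ u hu R
    have : {x : α → Rn n |
        Submodule.span ℝ (Set.range fun b : Fin 0 => x (j b.succ) - x (j 0) + δ b) ≠ ⊤ ∧
        u ∈ spanB R fun b : Fin 0 => x (j b.succ) - x (j 0) + δ b} = ∅ := by
      ext x
      simp only [Set.mem_setOf_eq, Set.mem_empty_iff_false, iff_false, not_and]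
      rintro - ⟨w, -, hw⟩
      exact hu (by rw [hw]; simp)
    rw [this]; exact measure_empty
  | succ r ih =>
    intro j hj δ u hu R
    set D : (α → Rn n) → Fin (r + 1) → Rn n :=
      fun x b => x (j b.succ) - x (j 0) + δ b with hD
    set front : (α → Rn n) → Fin r → Rn n := fun x b => D x b.castSucc with hfront
    -- the IH set
    set j' : Fin (r + 1) → α := fun b => j b.castSucc with hj'
    have hj'inj : Function.Injective j' := fun a b hab =>
      Fin.castSucc_injective _ (hj hab)
    have hfront_eq : ∀ x, front x = fun b : Fin r => x (j' b.succ) - x (j' 0) + δ b.castSucc := by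
      intro x
      funext b
      simp only [hfront, hD, hj']
      rw [Fin.succ_castSucc, Fin.castSucc_zero]
    -- the T sets
    set iL : α := j (Fin.last (r + 1)) with hiL
    have hiLne : ∀ c : Fin (r + 2), (c : ℕ) < r + 1 → iL ≠ j c := by
      intro c hc hce
      have h1 : Fin.last (r + 1) = c := hj hce
      have h2 : ((Fin.last (r + 1) : Fin (r + 2)) : ℕ) = (c : ℕ) := by rw [h1]
      simp only [Fin.val_last] at h2
      omega
    set G : (α → Rn n) → Fin (r + 1) → Rn n := fun x => Fin.cons u (front x) with hG
    set hfun : (α → Rn n) → Rn n := fun x => -(x (j 0)) + δ (Fin.last r) with hhfun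
    have hGcont : Continuous G := by
      refine continuous_pi fun b => ?_
      refine Fin.cases ?_ ?_ b
      · simpa [hG] using continuous_const
      · intro b'
        simp only [hG, Fin.cons_succ, hfront, hD]
        fun_prop
    have hcoverT : ∀ R' : ℕ, volume {x : α → Rn n |
        Submodule.span ℝ (Set.range (G x)) ≠ ⊤ ∧ x iL + hfun x ∈ spanB R' (G x)} = 0 := by
      intro R'
      refine key_null hn iL G hfun hGcont (by fun_prop) ?_ ?_ R'
      · intro x e
        funext b
        refine Fin.cases ?_ ?_ b
        · simp [hG]
        · intro b'
          have hA : j (b'.castSucc.succ) ≠ iL :=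
            Ne.symm (hiLne _ (by have hb := b'.isLt; simp only [Fin.val_succ, Fin.coe_castSucc]; omega))
          have hB : j 0 ≠ iL := Ne.symm (hiLne 0 (by simp))
          simp only [hG, Fin.cons_succ, hfront, hD]
          rw [Function.update_of_ne hA, Function.update_of_ne hB]
      · intro x e
        have hB : j 0 ≠ iL := Ne.symm (hiLne 0 (by simp))
        simp only [hhfun]
        rw [Function.update_of_ne hB]
    -- decompose
    have hsub : {x : α → Rn n |
        Submodule.span ℝ (Set.range (D x)) ≠ ⊤ ∧ u ∈ spanB R (D x)} ⊆
        {x : α → Rn n |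
          Submodule.span ℝ (Set.range fun b : Fin r => x (j' b.succ) - x (j' 0) + δ b.castSucc) ≠ ⊤ ∧
          u ∈ spanB R fun b : Fin r => x (j' b.succ) - x (j' 0) + δ b.castSucc} ∪
        ⋃ R' : ℕ, {x : α → Rn n |
          Submodule.span ℝ (Set.range (G x)) ≠ ⊤ ∧ x iL + hfun x ∈ spanB R' (G x)} := by
      intro x hx
      obtain ⟨hspan, w, hwb, hwsum⟩ := hx
      have hRnonneg : (0 : ℝ) ≤ R := le_trans (abs_nonneg _) (hwb 0)
      have hsum' : u = ∑ b : Fin r, w b.castSucc • front x b + w (Fin.last r) • D x (Fin.last r) := by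
        rw [hwsum, Fin.sum_univ_castSucc]
      have hfrontspan : Submodule.span ℝ (Set.range (front x)) ≤
          Submodule.span ℝ (Set.range (D x)) := by
        refine Submodule.span_mono ?_
        rintro - ⟨b, rfl⟩
        exact ⟨b.castSucc, rfl⟩
      by_cases hz : w (Fin.last r) = 0
      · left
        have hfx := hfront_eq x
        refine ⟨?_, ?_⟩
        · intro htop
          rw [← hfx] at htop
          exact hspan (top_le_iff.1 (htop ▸ hfrontspan))
        · rw [← hfx]
          exact ⟨fun b => w b.castSucc, fun b => hwb _, by rw [hsum', hz, zero_smul, add_zero]⟩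
      · right
        have huspan : u ∈ Submodule.span ℝ (Set.range (D x)) := by
          rw [hwsum]
          exact Submodule.sum_mem _ fun b _ =>
            Submodule.smul_mem _ _ (Submodule.subset_span (Set.mem_range_self b))
        have hGspan : Submodule.span ℝ (Set.range (G x)) ≤
            Submodule.span ℝ (Set.range (D x)) := by
          rw [hG, Fin.range_cons, Submodule.span_insert, sup_le_iff]
          exact ⟨(Submodule.span_singleton_le_iff_mem _ _).2 huspan, hfrontspan⟩
        have hdlast : x iL + hfun x = D x (Fin.last r) := by
          simp only [hD, hhfun, hiL]
          rw [Fin.succ_last]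
          abel
        have hdcomb : D x (Fin.last r) =
            (w (Fin.last r))⁻¹ • u +
              ∑ b : Fin r, (-((w (Fin.last r))⁻¹ * w b.castSucc)) • front x b := by
          have : w (Fin.last r) • D x (Fin.last r) =
              u - ∑ b : Fin r, w b.castSucc • front x b := by
            rw [hsum']; abel
          have h2 : D x (Fin.last r) =
              (w (Fin.last r))⁻¹ • (u - ∑ b : Fin r, w b.castSucc • front x b) := by
            rw [← this, smul_smul, inv_mul_cancel₀ hz, one_smul]
          rw [h2, smul_sub, Finset.smul_sum, sub_eq_add_neg, ← Finset.sum_neg_distrib]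
          congr 1
          refine Finset.sum_congr rfl fun b _ => ?_
          rw [smul_smul, neg_smul]
        obtain ⟨R', hR'⟩ := exists_nat_ge (max (|w (Fin.last r)|⁻¹) (|w (Fin.last r)|⁻¹ * R))
        refine Set.mem_iUnion.2 ⟨R', ?_, ?_⟩
        · intro htop
          exact hspan (top_le_iff.1 (htop ▸ hGspan))
        · refine ⟨Fin.cons ((w (Fin.last r))⁻¹)
            (fun b => -((w (Fin.last r))⁻¹ * w b.castSucc)), ?_, ?_⟩
          · intro b
            refine Fin.cases ?_ ?_ b
            · rw [Fin.cons_zero, abs_inv]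
              exact le_trans (le_max_left _ _) hR'
            · intro b'
              rw [Fin.cons_succ, abs_neg, abs_mul, abs_inv]
              refine le_trans (le_trans ?_ (le_max_right _ _)) hR'
              exact mul_le_mul_of_nonneg_left (hwb _) (inv_nonneg.2 (abs_nonneg _))
          · rw [hdlast, hdcomb, Fin.sum_univ_succ]
            simp only [Fin.cons_zero, Fin.cons_succ, hG]
    refine measure_mono_null hsub (measure_union_null ?_ ?_)
    · exact ih j' hj'inj (fun b => δ b.castSucc) u hu R
    · exact measure_iUnion_null hcoverT

end keylemma

section generic
variable {n : ℕ} (F : BasedSeq n)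

/-- the configuration of lattice-translated points. -/
def zfam (x : F.I → Rn n) {r : ℕ} (j : Fin (r + 1) → F.I) (v : Fin (r + 1) → Zn n) :
    Fin (r + 1) → Rn n := fun b => x (j b) + zToR (v b)

/-- its affine span. -/
def AffZ (x : F.I → Rn n) {r : ℕ} (j : Fin (r + 1) → F.I) (v : Fin (r + 1) → Zn n) :
    AffineSubspace ℝ (Rn n) := affineSpan ℝ (Set.range (zfam F x j v))

/-- the difference family. -/
def dfam (x : F.I → Rn n) {r : ℕ} (j : Fin (r + 1) → F.I) (v : Fin (r + 1) → Zn n) :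
    Fin (r + 1) → Rn n := fun b => x (j b) - x (j 0) + (zToR (v b) - zToR (v 0))

lemma AffZ_direction (x : F.I → Rn n) {r : ℕ} (j : Fin (r + 1) → F.I)
    (v : Fin (r + 1) → Zn n) :
    (AffZ F x j v).direction = Submodule.span ℝ (Set.range (dfam F x j v)) := by
  rw [AffZ, direction_affineSpan,
    vectorSpan_eq_span_vsub_set_right ℝ (Set.mem_range_self (0 : Fin (r + 1))),
    ← Set.range_comp]
  have hco : ((fun p => p -ᵥ zfam F x j v 0) ∘ zfam F x j v) = dfam F x j v := by
    funext b
    simp only [Function.comp_apply, zfam, dfam, vsub_eq_sub]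
    abel
  rw [hco]

lemma AffZ_ne_top_iff (x : F.I → Rn n) {r : ℕ} (j : Fin (r + 1) → F.I)
    (v : Fin (r + 1) → Zn n) :
    AffZ F x j v ≠ ⊤ ↔ Submodule.span ℝ (Set.range (dfam F x j v)) ≠ ⊤ := by
  rw [← AffZ_direction]
  constructor
  · intro h htop
    refine h ?_
    rw [AffZ, AffineSubspace.affineSpan_eq_top_iff_vectorSpan_eq_top_of_nonempty ℝ (Rn n) (Rn n)
      (Set.range_nonempty _), ← direction_affineSpan ℝ (Set.range (zfam F x j v))]
    exact htop
  · intro h htop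
    refine h ?_
    rw [AffZ] at htop
    rw [AffZ, direction_affineSpan]
    rw [AffineSubspace.affineSpan_eq_top_iff_vectorSpan_eq_top_of_nonempty ℝ (Rn n) (Rn n)
      (Set.range_nonempty _)] at htop
    exact htop

lemma mem_AffZ_iff (x : F.I → Rn n) {r : ℕ} (j : Fin (r + 1) → F.I)
    (v : Fin (r + 1) → Zn n) (p : Rn n) :
    p ∈ AffZ F x j v ↔
      p - (x (j 0) + zToR (v 0)) ∈ Submodule.span ℝ (Set.range (dfam F x j v)) := by
  rw [← AffZ_direction]
  have h0 : zfam F x j v 0 ∈ AffZ F x j v :=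
    subset_affineSpan ℝ _ (Set.mem_range_self 0)
  rw [← AffineSubspace.vsub_right_mem_direction_iff_mem h0 p]
  rfl

lemma bad1_null (hn : 1 ≤ n) (i j : F.I) (u : Zn n) (hij : i ≠ j) :
    volume {x : F.I → Rn n | x i = x j + zToR u} = 0 := by
  classical
  haveI : Nonempty (Fin n) := ⟨⟨0, hn⟩⟩
  set g : (F.I → Rn n) → Fin 0 → Rn n := fun _ _ => 0 with hg
  set h : (F.I → Rn n) → Rn n := fun x => -(x j) - zToR u with hh
  refine measure_mono_null (t := {x : F.I → Rn n |
      Submodule.span ℝ (Set.range (g x)) ≠ ⊤ ∧ x i + h x ∈ spanB 0 (g x)}) ?_ ?_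
  · intro x hx
    refine ⟨?_, ?_⟩
    · rw [Set.range_eq_empty, Submodule.span_empty]
      exact bot_ne_top
    · refine ⟨fun _ => 0, fun b => by simp, ?_⟩
      rw [Finset.univ_eq_empty, Finset.sum_empty, hh]
      have : x i = x j + zToR u := hx
      rw [this]; funext q; simp only [Pi.add_apply, Pi.sub_apply, Pi.neg_apply, Pi.zero_apply]; ring
  · refine key_null hn i g h continuous_const (by fun_prop) (fun x e => rfl) ?_ 0
    intro x e
    rw [hh]
    simp only
    rw [Function.update_of_ne (Ne.symm hij)]

lemma bad2_null (hn : 1 ≤ n) {r : ℕ} (j : Fin (r + 1) → F.I) (v : Fin (r + 1) → Zn n)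
    (i : F.I) (u : Zn n) (hj : Function.Injective j) (hi : ∀ b, i ≠ j b) :
    volume {x : F.I → Rn n | AffZ F x j v ≠ ⊤ ∧ x i + zToR u ∈ AffZ F x j v} = 0 := by
  classical
  set g : (F.I → Rn n) → Fin (r + 1) → Rn n := fun x => dfam F x j v with hg
  set h : (F.I → Rn n) → Rn n := fun x => zToR u - x (j 0) - zToR (v 0) with hh
  refine measure_mono_null (t := ⋃ R : ℕ, {x : F.I → Rn n |
      Submodule.span ℝ (Set.range (g x)) ≠ ⊤ ∧ x i + h x ∈ spanB R (g x)}) ?_ ?_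
  · intro x hx
    obtain ⟨hne, hmem⟩ := hx
    have h1 : Submodule.span ℝ (Set.range (g x)) ≠ ⊤ := (AffZ_ne_top_iff F x j v).1 hne
    have h2 : x i + h x ∈ Submodule.span ℝ (Set.range (g x)) := by
      have := (mem_AffZ_iff F x j v (x i + zToR u)).1 hmem
      have heq : x i + h x = x i + zToR u - (x (j 0) + zToR (v 0)) := by rw [hh]; abel
      rw [heq]
      exact this
    obtain ⟨R, hR⟩ := exists_spanB_of_mem_span h2
    exact Set.mem_iUnion.2 ⟨R, h1, hR⟩
  · refine measure_iUnion_null fun R => ?_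
    refine key_null hn i g h ?_ (by fun_prop) ?_ ?_ R
    · refine continuous_pi fun b => ?_
      simp only [hg, dfam]
      fun_prop
    · intro x e
      funext b
      simp only [hg, dfam]
      rw [Function.update_of_ne (Ne.symm (hi b)), Function.update_of_ne (Ne.symm (hi 0))]
    · intro x e
      simp only [hh]
      rw [Function.update_of_ne (Ne.symm (hi 0))]

lemma bad3_null (hn : 1 ≤ n) {r : ℕ} (j : Fin (r + 1) → F.I) (v : Fin (r + 1) → Zn n)
    (u : Zn n) (hj : Function.Injective j) (hu : u ≠ 0) :
    volume {x : F.I → Rn n | AffZ F x j v ≠ ⊤ ∧ zToR u ∈ (AffZ F x j v).direction} = 0 := by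
  classical
  set δ : Fin r → Rn n := fun b => zToR (v b.succ) - zToR (v 0) with hδ
  have hcons : ∀ x : F.I → Rn n, dfam F x j v =
      Fin.cons 0 (fun b : Fin r => x (j b.succ) - x (j 0) + δ b) := by
    intro x
    funext b
    refine Fin.cases ?_ ?_ b
    · simp [dfam]
    · intro b'
      rw [Fin.cons_succ]
      rfl
  have hspan_eq : ∀ x : F.I → Rn n, Submodule.span ℝ (Set.range (dfam F x j v)) =
      Submodule.span ℝ (Set.range fun b : Fin r => x (j b.succ) - x (j 0) + δ b) := by
    intro x
    rw [hcons x, Fin.range_cons, Submodule.span_insert_zero]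
  have huR : zToR u ≠ 0 := fun hc => hu (zToR_injective (hc.trans zToR_zero.symm))
  refine measure_mono_null (t := ⋃ R : ℕ, {x : F.I → Rn n |
      Submodule.span ℝ (Set.range fun b : Fin r => x (j b.succ) - x (j 0) + δ b) ≠ ⊤ ∧
      zToR u ∈ spanB R fun b : Fin r => x (j b.succ) - x (j 0) + δ b}) ?_ ?_
  · intro x hx
    obtain ⟨hne, hmem⟩ := hx
    have h1 := (AffZ_ne_top_iff F x j v).1 hne
    rw [hspan_eq x] at h1
    rw [AffZ_direction, hspan_eq x] at hmem
    obtain ⟨R, hR⟩ := exists_spanB_of_mem_span hmem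
    exact Set.mem_iUnion.2 ⟨R, h1, hR⟩
  · exact measure_iUnion_null fun R => null3 hn r j hj δ (zToR u) huR R

/-- The genericity property of a configuration. -/
def GoodCfg (x : F.I → Rn n) : Prop :=
  (∀ (i j : F.I) (u : Zn n), i ≠ j → x i ≠ x j + zToR u) ∧
  (∀ (r : ℕ) (j : Fin (r + 1) → F.I) (v : Fin (r + 1) → Zn n) (i : F.I) (u : Zn n),
    Function.Injective j → (∀ b, i ≠ j b) → AffZ F x j v ≠ ⊤ →
      x i + zToR u ∉ AffZ F x j v) ∧
  (∀ (r : ℕ) (j : Fin (r + 1) → F.I) (v : Fin (r + 1) → Zn n) (u : Zn n),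
    Function.Injective j → u ≠ 0 → AffZ F x j v ≠ ⊤ →
      zToR u ∉ (AffZ F x j v).direction)

lemma goodCfg_ae (hn : 1 ≤ n) : ∀ᵐ x : F.I → Rn n ∂volume, GoodCfg F x := by
  classical
  refine Filter.Eventually.and ?_ (Filter.Eventually.and ?_ ?_)
  · rw [MeasureTheory.ae_all_iff]; intro i
    rw [MeasureTheory.ae_all_iff]; intro j
    rw [MeasureTheory.ae_all_iff]; intro u
    by_cases hij : i = j
    · exact Filter.Eventually.of_forall fun x h => absurd hij h
    · have hb : ∀ᵐ x : F.I → Rn n ∂volume, x i ≠ x j + zToR u := by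
        rw [MeasureTheory.ae_iff]
        simpa [not_not] using bad1_null F hn i j u hij
      exact hb.mono fun x hx _ => hx
  · rw [MeasureTheory.ae_all_iff]; intro r
    rw [MeasureTheory.ae_all_iff]; intro j
    rw [MeasureTheory.ae_all_iff]; intro v
    rw [MeasureTheory.ae_all_iff]; intro i
    rw [MeasureTheory.ae_all_iff]; intro u
    by_cases hj : Function.Injective j
    · by_cases hi : ∀ b, i ≠ j b
      · have hb : ∀ᵐ x : F.I → Rn n ∂volume,
            ¬(AffZ F x j v ≠ ⊤ ∧ x i + zToR u ∈ AffZ F x j v) := by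
          rw [MeasureTheory.ae_iff]
          simpa [not_not] using bad2_null F hn j v i u hj hi
        exact hb.mono fun x hx _ _ hne hmem => hx ⟨hne, hmem⟩
      · exact Filter.Eventually.of_forall fun x _ h => absurd h hi
    · exact Filter.Eventually.of_forall fun x h => absurd h hj
  · rw [MeasureTheory.ae_all_iff]; intro r
    rw [MeasureTheory.ae_all_iff]; intro j
    rw [MeasureTheory.ae_all_iff]; intro v
    rw [MeasureTheory.ae_all_iff]; intro u
    by_cases hj : Function.Injective j
    · by_cases hu : u = 0
      · subst hu
        refine Filter.Eventually.of_forall fun x _ hu0 => absurd rfl hu0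
      · have hb : ∀ᵐ x : F.I → Rn n ∂volume,
            ¬(AffZ F x j v ≠ ⊤ ∧ zToR u ∈ (AffZ F x j v).direction) := by
          rw [MeasureTheory.ae_iff]
          simpa [not_not] using bad3_null F hn j v u hj hu
        exact hb.mono fun x hx _ _ hne hmem => hx ⟨hne, hmem⟩
    · exact Filter.Eventually.of_forall fun x h => absurd h hj

end generic

section mainproof
variable {n : ℕ} {F : BasedSeq n}

lemma convexHull_range_add {ι : Type*} (f : ι → Rn n) (v : Rn n) :
    convexHull ℝ (Set.range fun a => f a + v) =
      (fun p => p + v) '' convexHull ℝ (Set.range f) := by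
  have hT : (fun p : Rn n => p + v) = ⇑(AffineEquiv.constVAdd ℝ (Rn n) v).toAffineMap := by
    funext p
    exact add_comm p v
  have hrange : (Set.range fun a => f a + v) =
      ⇑(AffineEquiv.constVAdd ℝ (Rn n) v).toAffineMap '' Set.range f := by
    rw [← hT, ← Set.range_comp]
    rfl
  rw [hrange, ← AffineMap.image_convexHull, hT]

lemma toTorus_image_add (A : Set (Rn n)) (t : Zn n) :
    toTorus '' ((fun p => p + zToR t) '' A) = toTorus '' A := by
  rw [← Set.image_comp]
  refine Set.image_congr fun p _ => ?_
  exact toTorus_add_lattice p t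

lemma subset_TropT (x : F.I → Rn n) {k' : ℕ} {c : Fin (k' + 1) → F.I} {m : Fin k' → Zn n}
    (hg : goodTuple F c m) :
    toTorus '' convexHull ℝ (Set.range (vtx F x c m)) ⊆ TropT F x := by
  intro p hp
  exact Set.mem_iUnion.2 ⟨k', Set.mem_iUnion.2 ⟨c, Set.mem_iUnion.2 ⟨m,
    Set.mem_iUnion.2 ⟨hg, hp⟩⟩⟩⟩

/-- Forward direction. -/
lemma forward_dir (x : F.I → Rn n) (hx : GoodCfg F x) {k : ℕ}
    {i : Fin (k + 1) → F.I} {mb : Fin (k + 1) → Zn n}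
    (hInX : InX F x k fun a => x (i a) + zToR (mb a)) :
    StrictMono (fun a => F.deg (i a)) ∧
      toTorus '' convexHull ℝ (Set.range fun a => x (i a) + zToR (mb a)) ⊆ TropT F x := by
  obtain ⟨c, m, t, hgood, heq⟩ := hInX
  have hic : ∀ a, i a = c a := by
    intro a
    by_contra hne
    have h1 : x (i a) + zToR (mb a) = x (c a) + zToR (pSum m a) + zToR t := by
      have h0 := heq a
      rw [vtx_eq_pSum] at h0
      exact h0
    have h2 : x (i a) = x (c a) + zToR (pSum m a + t - mb a) := by
      have h3 : x (c a) + zToR (pSum m a + t - mb a) =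
          (x (c a) + zToR (pSum m a) + zToR t) - zToR (mb a) := by
        rw [zToR_sub, zToR_add]; abel
      rw [h3, ← h1]; abel
    exact hx.1 (i a) (c a) (pSum m a + t - mb a) hne h2
  constructor
  · have : (fun a => F.deg (i a)) = fun a => F.deg (c a) := by
      funext a; rw [hic a]
    rw [this]
    exact hgood.strictMono_deg
  · have hyv : (fun a => x (i a) + zToR (mb a)) = fun a => vtx F x c m a + zToR t :=
      funext heq
    rw [hyv, convexHull_range_add, toTorus_image_add]
    exact subset_TropT x hgood

/-- Backward direction. -/
lemma backward_dir (hn : 1 ≤ n) (x : F.I → Rn n) (hx : GoodCfg F x)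
    (hint : interior (TropT F x) = ∅) {k : ℕ}
    {i : Fin (k + 1) → F.I} {mb : Fin (k + 1) → Zn n}
    (hmono : StrictMono (fun a => F.deg (i a)))
    (himg : toTorus '' convexHull ℝ (Set.range fun a => x (i a) + zToR (mb a)) ⊆ TropT F x) :
    InX F x k (fun a => x (i a) + zToR (mb a)) := by
  classical
  set y : Fin (k + 1) → Rn n := fun a => x (i a) + zToR (mb a) with hy
  set σS : Set (Rn n) := convexHull ℝ (Set.range y) with hσ
  have hσconv : Convex ℝ σS := convex_convexHull _ _
  have hσcomp : IsCompact σS := (Set.finite_range y).isCompact_convexHull ℝ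
  have hymem : ∀ a, y a ∈ σS := fun a => subset_convexHull _ _ (Set.mem_range_self a)
  -- countable data
  set D := {d : Σ k' : ℕ, (Fin (k' + 1) → F.I) × (Fin k' → Zn n) × Zn n //
    goodTuple F d.2.1 d.2.2.1} with hD
  set Cset : D → Set (Rn n) := fun d =>
    convexHull ℝ (Set.range fun b => vtx F x d.1.2.1 d.1.2.2.1 b + zToR d.1.2.2.2) with hCset
  have hCsetT : ∀ d : D, toTorus '' Cset d ⊆ TropT F x := by
    intro d
    rw [hCset]
    simp only
    rw [convexHull_range_add, toTorus_image_add]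
    exact subset_TropT x d.2
  have hcover : σS ⊆ ⋃ d : D, Cset d := by
    intro p hp
    have h1 : toTorus p ∈ TropT F x := himg ⟨p, hp, rfl⟩
    rw [TropT] at h1
    simp only [Set.mem_iUnion] at h1
    obtain ⟨k', c', m', hg', hmem⟩ := h1
    obtain ⟨q, hq, htq⟩ := hmem
    obtain ⟨t, hpt⟩ := toTorus_eq_iff.1 htq.symm
    refine Set.mem_iUnion.2 ⟨⟨⟨k', c', m', t⟩, hg'⟩, ?_⟩
    rw [hCset]
    simp only
    rw [convexHull_range_add]
    exact ⟨q, hq, hpt.symm⟩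
  -- Baire category
  haveI : Nonempty ↥σS := ⟨⟨y 0, hymem 0⟩⟩
  haveI : CompactSpace ↥σS := isCompact_iff_compactSpace.1 hσcomp
  have hclosed : ∀ d : D, IsClosed (Subtype.val ⁻¹' Cset d : Set ↥σS) := by
    intro d
    refine IsClosed.preimage continuous_subtype_val ?_
    rw [hCset]
    exact ((Set.finite_range _).isCompact_convexHull ℝ).isClosed
  have huniv : ⋃ d : D, (Subtype.val ⁻¹' Cset d : Set ↥σS) = Set.univ := by
    ext q
    simp only [Set.mem_iUnion, Set.mem_univ, iff_true, Set.mem_preimage]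
    exact Set.mem_iUnion.1 (hcover q.2)
  obtain ⟨d, hdne⟩ := nonempty_interior_of_iUnion_of_closed hclosed huniv
  obtain ⟨u₀, hu₀⟩ := hdne
  obtain ⟨ε, hε, hball⟩ := Metric.mem_nhds_iff.1 (mem_interior_iff_mem_nhds.1 hu₀)
  have hu0C : (u₀ : Rn n) ∈ Cset d := hball (Metric.mem_ball_self hε)
  -- notation for the chain data
  set k'' : ℕ := d.1.1 with hk''
  set c' : Fin (k'' + 1) → F.I := d.1.2.1 with hc'
  set m' : Fin k'' → Zn n := d.1.2.2.1 with hm'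
  set t : Zn n := d.1.2.2.2 with ht
  have hgood' : goodTuple F c' m' := d.2
  set vfun : Fin (k'' + 1) → Zn n := fun b => pSum m' b + t with hvfun
  have hvtxT : (fun b => vtx F x c' m' b + zToR t) = zfam F x c' vfun := by
    funext b
    rw [vtx_eq_pSum, zfam, hvfun, zToR_add]
    abel
  have hCsub : Cset d ⊆ (AffZ F x c' vfun : Set (Rn n)) := by
    rw [hCset, AffZ]
    simp only
    rw [← hvtxT]
    exact convexHull_subset_affineSpan _
  -- every vertex of σS lies in the affine span
  have hyA : ∀ a, y a ∈ AffZ F x c' vfun := by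
    intro a
    set v : Rn n := y a - ↑u₀ with hv
    set s : ℝ := min 1 (ε / (2 * (‖v‖ + 1))) with hs
    have hs0 : 0 < s := lt_min one_pos (div_pos hε (by positivity))
    have hs1 : s ≤ 1 := min_le_left _ _
    have hwσ : (1 - s) • (u₀ : Rn n) + s • y a ∈ σS :=
      hσconv u₀.2 (hymem a) (by linarith) (le_of_lt hs0) (by ring)
    set w : Rn n := (1 - s) • (u₀ : Rn n) + s • y a with hw
    have hwu : w - ↑u₀ = s • v := by
      rw [hw, hv, sub_smul, one_smul, smul_sub]
      abel
    have hdist : dist (⟨w, hwσ⟩ : ↥σS) u₀ < ε := by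
      rw [Subtype.dist_eq, dist_eq_norm, hwu, norm_smul, Real.norm_eq_abs,
        abs_of_pos hs0]
      have h2 : s ≤ ε / (2 * (‖v‖ + 1)) := min_le_right _ _
      have h3 : s * ‖v‖ ≤ ε / (2 * (‖v‖ + 1)) * ‖v‖ :=
        mul_le_mul_of_nonneg_right h2 (norm_nonneg v)
      have h4 : ε / (2 * (‖v‖ + 1)) * ‖v‖ < ε := by
        rw [div_mul_eq_mul_div, div_lt_iff₀ (by positivity)]
        nlinarith [norm_nonneg v]
      linarith
    have hwC : w ∈ Cset d := hball (Metric.mem_ball.2 hdist)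
    have hyeq : y a = AffineMap.lineMap (u₀ : Rn n) w s⁻¹ := by
      rw [AffineMap.lineMap_apply, vsub_eq_sub, vadd_eq_add, hwu, smul_smul,
        inv_mul_cancel₀ (ne_of_gt hs0), one_smul, hv]
      abel
    rw [hyeq]
    exact AffineMap.lineMap_mem _ (hCsub hu0C) (hCsub hwC)
  -- properness of the affine span
  have hAne : AffZ F x c' vfun ≠ ⊤ := by
    intro htop
    have hiC : (interior (Cset d)).Nonempty := by
      rw [hCset]
      simp only
      rw [Convex.interior_nonempty_iff_affineSpan_eq_top (convex_convexHull _ _),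
        affineSpan_convexHull, hvtxT]
      exact htop
    obtain ⟨p, hp⟩ := hiC
    have hopen : IsOpen (toTorus '' interior (Cset d)) :=
      isOpenMap_toTorus _ isOpen_interior
    have hsubT : toTorus '' interior (Cset d) ⊆ TropT F x :=
      (Set.image_mono interior_subset).trans (hCsetT d)
    have hsubint : toTorus '' interior (Cset d) ⊆ interior (TropT F x) :=
      interior_maximal hsubT hopen
    rw [hint] at hsubint
    exact hsubint ⟨p, hp, rfl⟩
  -- select indices
  have hsel : ∀ a, ∃ b, i a = c' b := by
    intro a
    by_contra hno
    push_neg at hno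
    refine hx.2.1 k'' c' vfun (i a) (mb a) hgood'.injective hno hAne ?_
    exact hyA a
  choose bf hbf using hsel
  -- the lattice shifts agree
  have hmbeq : ∀ a, mb a = pSum m' (bf a) + t := by
    intro a
    by_contra hne
    have h1 : y a ∈ AffZ F x c' vfun := hyA a
    have h2 : zfam F x c' vfun (bf a) ∈ AffZ F x c' vfun :=
      subset_affineSpan ℝ _ (Set.mem_range_self _)
    have h3 := AffineSubspace.vsub_mem_direction h1 h2
    have h4 : y a -ᵥ zfam F x c' vfun (bf a) = zToR (mb a - vfun (bf a)) := by
      rw [vsub_eq_sub, hy, zfam]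
      simp only
      rw [hbf a, zToR_sub]
      abel
    rw [h4] at h3
    refine hx.2.2 k'' c' vfun (mb a - vfun (bf a)) hgood'.injective ?_ hAne h3
    intro h0
    exact hne (by rw [← sub_eq_zero]; exact h0)
  -- selection is strictly monotone
  have hbfmono : StrictMono bf := by
    intro a a' haa'
    have h1 : F.deg (c' (bf a)) < F.deg (c' (bf a')) := by
      rw [← hbf a, ← hbf a']
      exact hmono haa'
    exact (goodTuple.strictMono_deg hgood').lt_iff_lt.1 h1
  -- construct the witness
  refine ⟨fun a => c' (bf a), fun ℓ => pSum m' (bf ℓ.succ) - pSum m' (bf ℓ.castSucc),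
    pSum m' (bf 0) + t, ?_, ?_⟩
  · intro ℓ
    exact hgood'.echain_pSum (hbfmono (Fin.castSucc_lt_succ (i := ℓ)))
  · intro a
    change x (i a) + zToR (mb a) = _
    rw [vtx_eq_pSum]
    have htel : pSum (fun ℓ => pSum m' (bf ℓ.succ) - pSum m' (bf ℓ.castSucc)) a
        = pSum m' (bf a) - pSum m' (bf 0) := by
      induction a using Fin.induction with
      | zero => rw [pSum_zero, sub_self]
      | succ ℓ ih => rw [pSum_succ, ih]; abel
    rw [htel, hbf a, hmbeq a, zToR_sub, zToR_add, zToR_add]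
    abel

end mainproof


/-- for almost every configuration, if `T(F^•)` has empty interior then a
linear `k`-simplex on vertices `x_{i_0}, x_{i_1}+m̄_1, …` belongs to `X(F^•)_k` iff the
degrees are strictly increasing and its image is contained in `T(F^•)`. -/
theorem stmt4 (n : ℕ) (hn : 1 ≤ n) (F : BasedSeq n) :
    ∀ᵐ x : F.I → Rn n ∂volume,
      interior (TropT F x) = ∅ →
        ∀ (k : ℕ) (i : Fin (k + 1) → F.I) (mb : Fin (k + 1) → Zn n), mb 0 = 0 →
          (InX F x k (fun a => x (i a) + zToR (mb a)) ↔
            StrictMono (fun a => F.deg (i a)) ∧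
              toTorus '' convexHull ℝ (Set.range fun a => x (i a) + zToR (mb a)) ⊆
                TropT F x) := by
  refine (goodCfg_ae F hn).mono fun x hx => ?_
  intro hint k i mb _
  constructor
  · exact forward_dir x hx
  · rintro ⟨h1, h2⟩
    exact backward_dir hn x hx hint h1 h2

end
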